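/- arXiv:2303.10619 — 3 statements merged into one kernel-verified Lean document; each statement's English description precedes it below -/
import Mathlib

section
/- For any infinite sequential persuasion S starting from μ, if the limit as n → ∞ of the probability that S terminates after n steps is strictly less than 1, then there exist n ∈ ℕ and an n-step sequential persuasion S' starting from μ such that 𝒱(S') > 𝒱(S). -/
open Filter Topology
open scoped Classical

noncomputable section

/-- Δ(Ω): beliefs, i.e. probability distributions on the finite state space Ω,
as a subspace of Ω → ℝ (its topology agrees with the total-variation one). -/
abbrev Belief (Ω : Type*) [Fintype Ω] :=
  {p : Ω → ℝ // (∀ ω, 0 ≤ p ω) ∧ ∑ ω, p ω = 1}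

variable {Ω : Type*} [Fintype Ω]

/-- An element of F₀: a finite-support experiment, i.e. a finitely supported probability
distribution over beliefs (keys are the distinct posteriors p_j, values the positive
weights λ_j). -/
structure SPExp (Ω : Type*) [Fintype Ω] where
  w : Belief Ω →₀ ℝ
  nonneg : ∀ p, 0 ≤ w p
  sum_one : ∑ p ∈ w.support, w p = 1

namespace SPExp

/-- τ(e): the support of an experiment. -/
def tau (e : SPExp Ω) : Finset (Belief Ω) := e.w.support

/-- Expectation of a real-valued function under an experiment. -/
def expect (e : SPExp Ω) (f : Belief Ω → ℝ) : ℝ := ∑ p ∈ e.w.support, e.w p * f p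

/-- σ(e): the barycenter (expectation) of an experiment. -/
def sigma (e : SPExp Ω) : Belief Ω :=
  ⟨fun ω => ∑ p ∈ e.w.support, e.w p * p.val ω,
   fun ω => Finset.sum_nonneg fun p _ => mul_nonneg (e.nonneg p) (p.2.1 ω),
   by
     calc ∑ ω, ∑ p ∈ e.w.support, e.w p * p.val ω
         = ∑ p ∈ e.w.support, ∑ ω, e.w p * p.val ω := Finset.sum_comm
       _ = ∑ p ∈ e.w.support, e.w p * ∑ ω, p.val ω := by
           refine Finset.sum_congr rfl fun p _ => ?_
           rw [Finset.mul_sum]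
       _ = ∑ p ∈ e.w.support, e.w p := by
           refine Finset.sum_congr rfl fun p _ => ?_
           rw [p.2.2, mul_one]
       _ = 1 := e.sum_one⟩

/-- The trivial experiment (1, p). -/
def triv (p : Belief Ω) : SPExp Ω where
  w := Finsupp.single p 1
  nonneg := fun q => by
    rw [Finsupp.single_apply]
    split <;> norm_num
  sum_one := by
    rw [Finsupp.support_single_ne_zero _ one_ne_zero]
    simp

end SPExp

/-- T: the set of trivial experiments. -/
def Trivials (Ω : Type*) [Fintype Ω] : Set (SPExp Ω) := Set.range SPExp.triv

/-- Weak convergence of experiments, viewed as Borel probability measures on Δ(Ω). -/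
def WeakTendsto (es : ℕ → SPExp Ω) (e : SPExp Ω) : Prop :=
  ∀ f : Belief Ω → ℝ, Continuous f →
    Tendsto (fun i => (es i).expect f) atTop (𝓝 (e.expect f))

/-- Convergence of beliefs in total variation. -/
def TVTendsto (ps : ℕ → Belief Ω) (p : Belief Ω) : Prop :=
  Tendsto (fun i => ∑ ω, |(ps i).val ω - p.val ω|) atTop (𝓝 0)

/-- Histories, most recent step first: entries are (experiment taken, realized posterior);
the starting belief is kept separately. -/
abbrev Hist (Ω : Type*) [Fintype Ω] := List (SPExp Ω × Belief Ω)

/-- last(ξ): the current belief after history ξ started at μ. -/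
def lastBelief (μ : Belief Ω) : Hist Ω → Belief Ω
  | [] => μ
  | (_, p) :: _ => p

/-- Pr[ξ]: the probability of a history. -/
def histProb : Hist Ω → ℝ
  | [] => 1
  | (e, p) :: ξ => e.w p * histProb ξ

/-- A sequential persuasion starting from μ with feasible experiments F, given by its
history-dependent choice of the next (feasible, Bayes-plausible) experiment.  An n-step
sequential persuasion is such a strategy used for n steps; an infinite sequential
persuasion is the strategy itself. -/
structure SeqP {Ω : Type*} [Fintype Ω] (F : Set (SPExp Ω)) (μ : Belief Ω) where
  next : Hist Ω → SPExp Ω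
  feasible : ∀ ξ, next ξ ∈ F
  bayes : ∀ ξ, (next ξ).sigma = lastBelief μ ξ

variable {F : Set (SPExp Ω)} {μ : Belief Ω}

/-- Expectation of g over the n-step histories of S extending ξ. -/
def histExp (S : SeqP F μ) (g : Hist Ω → ℝ) : ℕ → Hist Ω → ℝ
  | 0, ξ => g ξ
  | n + 1, ξ => (S.next ξ).expect fun p => histExp S g n ((S.next ξ, p) :: ξ)

/-- Ξ_n: the set of n-step histories of S. -/
def Hists (S : SeqP F μ) : ℕ → Set (Hist Ω)
  | 0 => {[]}
  | n + 1 => {ξ' | ∃ ξ ∈ Hists S n, ∃ p ∈ (S.next ξ).tau, ξ' = (S.next ξ, p) :: ξ}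

/-- ξ padded by l trivial steps. -/
def padHist (μ : Belief Ω) (ξ : Hist Ω) (l : ℕ) : Hist Ω :=
  List.replicate l (SPExp.triv (lastBelief μ ξ), lastBelief μ ξ) ++ ξ

/-- S terminates after ξ: all subsequent choices (along trivial continuations of ξ)
are the trivial experiment. -/
def TerminatesAfter (S : SeqP F μ) (ξ : Hist Ω) : Prop :=
  ∀ l : ℕ, S.next (padHist μ ξ l) = SPExp.triv (lastBelief μ ξ)

/-- 𝒱(S⁽ⁿ⁾) = E[v(b_n)], the expected utility of the n-step persuasion given by the
first n steps of S. -/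
def stepUtility (v : Belief Ω → ℝ) (S : SeqP F μ) (n : ℕ) : ℝ :=
  histExp S (fun ξ => v (lastBelief μ ξ)) n []

/-- Pr[S terminates after n steps]. -/
def termProb (S : SeqP F μ) (n : ℕ) : ℝ :=
  histExp S (fun ξ => if TerminatesAfter S ξ then 1 else 0) n []

/-- 𝒱(S) for an infinite sequential persuasion S. -/
def infUtility (v : Belief Ω → ℝ) (S : SeqP F μ) : ℝ :=
  ⨆ n : ℕ, histExp S (fun ξ => if TerminatesAfter S ξ then v (lastBelief μ ξ) else 0) n []

/-- Pr[b_n ∈ O] for the belief b_n induced by S after n steps. -/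
def massIn (S : SeqP F μ) (O : Set (Belief Ω)) (n : ℕ) : ℝ :=
  histExp S (fun ξ => if lastBelief μ ξ ∈ O then 1 else 0) n []

/-- v_n(p): the optimal value over n-step sequential persuasions starting from p. -/
def vN (F : Set (SPExp Ω)) (v : Belief Ω → ℝ) (n : ℕ) (p : Belief Ω) : ℝ :=
  ⨆ S : SeqP F p, stepUtility v S n

/-- v_∞(p): the optimal value over infinite sequential persuasions starting from p. -/
def vInf (F : Set (SPExp Ω)) (v : Belief Ω → ℝ) (p : Belief Ω) : ℝ :=
  ⨆ S : SeqP F p, infUtility v S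

/-- Assumption 1: a uniform support bound h, and weak closedness of F. -/
def Assumption1 (F : Set (SPExp Ω)) (h : ℕ) : Prop :=
  (∀ e ∈ F, e.tau.card ≤ h) ∧
  ∀ es : ℕ → SPExp Ω, (∀ i, es i ∈ F) → ∀ e : SPExp Ω, WeakTendsto es e → e ∈ F

/-- Shannon entropy of a belief. -/
def entropy (p : Belief Ω) : ℝ := -∑ ω, p.val ω * Real.log (p.val ω)

/-- Assumption 2: every nontrivial feasible experiment lowers expected entropy by δ. -/
def Assumption2 (F : Set (SPExp Ω)) (δ : ℝ) : Prop :=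
  ∀ e ∈ F \ Trivials Ω, e.expect entropy ≤ entropy e.sigma - δ

/-- S is (effectively) an n-step sequential persuasion: after n steps it only takes
trivial experiments. -/
def IsNStep (S : SeqP F μ) (n : ℕ) : Prop :=
  ∀ ξ : Hist Ω, n ≤ ξ.length → S.next ξ = SPExp.triv (lastBelief μ ξ)

/-- Assumption 3 at prior μ: a sequence of finite-step sequential persuasions whose
values tend to v_∞(μ) and which terminate at a uniform rate. -/
def Assumption3 (F : Set (SPExp Ω)) (v : Belief Ω → ℝ) (μ : Belief Ω) : Prop :=
  ∃ (nk : ℕ → ℕ) (Sk : ℕ → SeqP F μ),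
    (∀ k, IsNStep (Sk k) (nk k)) ∧
    Tendsto (fun k => stepUtility v (Sk k) (nk k)) atTop (𝓝 (vInf F v μ)) ∧
    ∀ ε : ℝ, 0 < ε → ∃ N : ℕ, ∀ k, N ≤ nk k → 1 - ε ≤ termProb (Sk k) N

/-- v̂: the concave closure of v (the value of unconstrained Bayesian persuasion). -/
def concaveClosure (v : Belief Ω → ℝ) (p : Belief Ω) : ℝ :=
  sSup {x : ℝ | ∃ e : SPExp Ω, e.sigma = p ∧ x = e.expect v}

/-- O is implementable for (μ, F). -/
def Implementable (F : Set (SPExp Ω)) (μ : Belief Ω) (O : Set (Belief Ω)) : Prop :=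
  ∀ ε : ℝ, 0 < ε → ∃ (n : ℕ) (S : SeqP F μ), 1 - ε < massIn S O n

/-- S is a Markov sequential persuasion compatible with (μ, D, Z, ρ). -/
def MarkovCompatible (S : SeqP F μ) (D Z : Set (Belief Ω)) (ρ : Belief Ω → SPExp Ω) : Prop :=
  ∀ ξ : Hist Ω,
    (lastBelief μ ξ ∈ D → S.next ξ = ρ (lastBelief μ ξ)) ∧
    (lastBelief μ ξ ∈ Z → S.next ξ = SPExp.triv (lastBelief μ ξ))

/-- The j-th child of vertex m at depth n of the infinite h-ary tree. -/
def treeChild {h n : ℕ} (m : Fin (h ^ n)) (j : Fin h) : Fin (h ^ (n + 1)) :=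
  ⟨m.val * h + j.val, by
    have h1 : m.val + 1 ≤ h ^ n := m.isLt
    have h2 : j.val < h := j.isLt
    calc m.val * h + j.val < m.val * h + h := by omega
      _ = (m.val + 1) * h := by ring
      _ ≤ h ^ n * h := Nat.mul_le_mul h1 le_rfl
      _ = h ^ (n + 1) := (pow_succ h n).symm⟩

/-- An h-branching sequential persuasion starting from μ. -/
structure HBranch (Ω : Type*) [Fintype Ω] (F : Set (SPExp Ω)) (h : ℕ) (μ : Belief Ω) where
  π : ∀ n : ℕ, Fin (h ^ n) → ℝ
  β : ∀ n : ℕ, Fin (h ^ n) → Belief Ω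
  η : ∀ n : ℕ, Fin (h ^ n) → SPExp Ω
  π_nonneg : ∀ n m, 0 ≤ π n m
  π_sum : ∀ n : ℕ, ∑ m, π n m = 1
  η_mem : ∀ n m, η n m ∈ F
  β_root : ∀ m, β 0 m = μ
  compat_sigma : ∀ n m, (η n m).sigma = β n m
  compat_tau : ∀ (n : ℕ) (m : Fin (h ^ n)), ∀ p ∈ (η n m).tau,
    ∃ j : Fin h, β (n + 1) (treeChild m j) = p
  consistent : ∀ (n : ℕ) (m : Fin (h ^ n)) (p : Belief Ω),
    (∑ j : Fin h, if β (n + 1) (treeChild m j) = p then π (n + 1) (treeChild m j) else 0)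
      = π n m * (η n m).w p

/-- c' (at depth n + l) is a descendant of c (at depth n) in the h-ary tree. -/
def Descendant {h : ℕ} : {n : ℕ} → (l : ℕ) → Fin (h ^ n) → Fin (h ^ (n + l)) → Prop
  | _, 0, c, c' => c = c'
  | _, l + 1, c, c' => ∃ c'' j, Descendant l c c'' ∧ c' = treeChild c'' j

namespace HBranch

variable {h : ℕ}

/-- B terminates after vertex m at depth n. -/
def TermAfter (B : HBranch Ω F h μ) (n : ℕ) (m : Fin (h ^ n)) : Prop :=
  B.η n m ∈ Trivials Ω ∧
  ∀ (l : ℕ) (c' : Fin (h ^ (n + l))), Descendant l m c' → 0 < B.π (n + l) c' →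
    B.η (n + l) c' ∈ Trivials Ω

/-- Pr[B terminates after n steps]. -/
def termProb (B : HBranch Ω F h μ) (n : ℕ) : ℝ :=
  ∑ m : Fin (h ^ n), if B.TermAfter n m then B.π n m else 0

end HBranch

/-- B represents the infinite sequential persuasion S (via maps r_n : C_n → Ξ_n). -/
def Represents (S : SeqP F μ) {h : ℕ} (B : HBranch Ω F h μ) : Prop :=
  ∃ r : ∀ n : ℕ, Fin (h ^ n) → Hist Ω,
    ∀ n : ℕ,
      (∀ c, r n c ∈ Hists S n) ∧
      (∀ ξ ∈ Hists S n, histProb ξ = ∑ c, if r n c = ξ then B.π n c else 0) ∧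
      (∀ c, lastBelief μ (r n c) = B.β n c ∧ S.next (r n c) = B.η n c) ∧
      (∀ l : ℕ, ∀ ξ ∈ Hists S n, ∀ ξ' ∈ Hists S (n + l),
        (ξ <:+ ξ' ↔
          ∀ c' : Fin (h ^ (n + l)), r (n + l) c' = ξ' →
            ∃ c : Fin (h ^ n), r n c = ξ ∧ Descendant l c c'))

/-- The number of nontrivial experiments taken along a history. -/
def nontrivCount (ξ : Hist Ω) : ℕ :=
  ξ.countP fun s => decide (s.1 ∉ Trivials Ω)

/-! ### Auxiliary lemmas for Lemma 1 -/

lemma SPExp.expect_nonneg (e : SPExp Ω) {f : Belief Ω → ℝ} (hf : ∀ p, 0 ≤ f p) :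
    0 ≤ e.expect f :=
  Finset.sum_nonneg fun p _ => mul_nonneg (e.nonneg p) (hf p)

lemma SPExp.expect_mono (e : SPExp Ω) {f g : Belief Ω → ℝ} (h : ∀ p, f p ≤ g p) :
    e.expect f ≤ e.expect g :=
  Finset.sum_le_sum fun p _ => mul_le_mul_of_nonneg_left (h p) (e.nonneg p)

lemma SPExp.expect_combo (e : SPExp Ω) (f g : Belief Ω → ℝ) (a b c : ℝ) :
    e.expect (fun p => a * f p + b * g p + c)
      = a * e.expect f + b * e.expect g + c := by
  simp only [SPExp.expect]
  have h : ∀ p ∈ e.w.support, e.w p * (a * f p + b * g p + c)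
      = a * (e.w p * f p) + b * (e.w p * g p) + e.w p * c := fun p _ => by ring
  rw [Finset.sum_congr rfl h, Finset.sum_add_distrib, Finset.sum_add_distrib,
    ← Finset.mul_sum, ← Finset.mul_sum, ← Finset.sum_mul, e.sum_one, one_mul]

lemma SPExp.expect_triv (p : Belief Ω) (f : Belief Ω → ℝ) :
    (SPExp.triv p).expect f = f p := by
  unfold SPExp.expect SPExp.triv
  simp only
  rw [Finsupp.support_single_ne_zero _ one_ne_zero]
  simp

lemma histExp_mono (S : SeqP F μ) {g g' : Hist Ω → ℝ} (h : ∀ ξ, g ξ ≤ g' ξ) :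
    ∀ n ξ, histExp S g n ξ ≤ histExp S g' n ξ := by
  intro n
  induction n with
  | zero => exact h
  | succ n ih =>
    intro ξ
    exact (S.next ξ).expect_mono fun p => ih _

lemma histExp_combo (S : SeqP F μ) (f g : Hist Ω → ℝ) (a b c : ℝ) :
    ∀ n ξ, histExp S (fun ξ => a * f ξ + b * g ξ + c) n ξ
      = a * histExp S f n ξ + b * histExp S g n ξ + c := by
  intro n
  induction n with
  | zero => intro ξ; rfl
  | succ n ih =>
    intro ξ
    show (S.next ξ).expect _ = _
    rw [show (fun p => histExp S (fun ξ => a * f ξ + b * g ξ + c) n ((S.next ξ, p) :: ξ))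
        = fun p => a * histExp S f n ((S.next ξ, p) :: ξ)
            + b * histExp S g n ((S.next ξ, p) :: ξ) + c from funext fun p => ih _]
    exact (S.next ξ).expect_combo _ _ a b c

lemma histExp_succ (S : SeqP F μ) (g : Hist Ω → ℝ) :
    ∀ n ξ, histExp S g (n + 1) ξ
      = histExp S (fun ξ => (S.next ξ).expect fun p => g ((S.next ξ, p) :: ξ)) n ξ := by
  intro n
  induction n with
  | zero => intro ξ; rfl
  | succ n ih =>
    intro ξ
    show (S.next ξ).expect (fun p => histExp S g (n + 1) ((S.next ξ, p) :: ξ)) = _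
    exact congrArg _ (funext fun p => ih _)

lemma term_next {S : SeqP F μ} {ξ : Hist Ω} (hT : TerminatesAfter S ξ) :
    S.next ξ = SPExp.triv (lastBelief μ ξ) := by
  have := hT 0
  simpa [padHist] using this

lemma term_cons {S : SeqP F μ} {ξ : Hist Ω} (hT : TerminatesAfter S ξ) :
    TerminatesAfter S ((SPExp.triv (lastBelief μ ξ), lastBelief μ ξ) :: ξ) := by
  intro l
  have h1 := hT (l + 1)
  have h2 : padHist μ ((SPExp.triv (lastBelief μ ξ), lastBelief μ ξ) :: ξ) l
      = padHist μ ξ (l + 1) := by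
    simp [padHist, lastBelief, List.replicate_succ']
  rw [h2, h1]
  rfl

/-- One-step domination for terminal indicators weighted by a nonnegative function. -/
lemma step_le (S : SeqP F μ) (u : Belief Ω → ℝ) (hu : ∀ p, 0 ≤ u p) (ξ : Hist Ω) :
    (if TerminatesAfter S ξ then u (lastBelief μ ξ) else 0)
      ≤ (S.next ξ).expect fun p =>
          if TerminatesAfter S ((S.next ξ, p) :: ξ)
            then u (lastBelief μ ((S.next ξ, p) :: ξ)) else 0 := by
  by_cases hT : TerminatesAfter S ξ
  · rw [if_pos hT]
    rw [term_next hT]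
    simp only [SPExp.expect_triv]
    rw [if_pos (term_cons hT)]
    exact le_of_eq rfl
  · rw [if_neg hT]
    exact (S.next ξ).expect_nonneg fun p => by
      split
      · exact hu _
      · exact le_rfl

lemma termWeighted_mono (S : SeqP F μ) (u : Belief Ω → ℝ) (hu : ∀ p, 0 ≤ u p) :
    Monotone fun n =>
      histExp S (fun ξ => if TerminatesAfter S ξ then u (lastBelief μ ξ) else 0) n [] := by
  apply monotone_nat_of_le_succ
  intro n
  rw [histExp_succ]
  exact histExp_mono S (step_le S u hu) n []

end

/-- Lemma 1 (lem-AS-terminate): if an infinite sequential persuasion does not terminate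
with limiting probability 1, some finite-step sequential persuasion beats it. -/
theorem lem_AS_terminate {Ω : Type*} [Fintype Ω] [Nonempty Ω]
    (F : Set (SPExp Ω)) (hTF : Trivials Ω ⊆ F)
    (v : Belief Ω → ℝ) (Vlo Vhi : ℝ) (hVlo : 0 < Vlo) (hVV : Vlo ≤ Vhi)
    (hvlo : ∀ p, Vlo ≤ v p) (hvhi : ∀ p, v p ≤ Vhi)
    (husc : UpperSemicontinuous v)
    (μ : Belief Ω) (S : SeqP F μ) (L : ℝ)
    (hL : Filter.Tendsto (fun n => termProb S n) Filter.atTop (nhds L)) (hL1 : L < 1) :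
    ∃ (n : ℕ) (S' : SeqP F μ), infUtility v S < stepUtility v S' n := by
  classical
  set gV : Hist Ω → ℝ :=
    fun ξ => if TerminatesAfter S ξ then v (lastBelief μ ξ) else 0 with hgV
  set gT : Hist Ω → ℝ :=
    fun ξ => if TerminatesAfter S ξ then 1 else 0 with hgT
  set W : ℕ → ℝ := fun n => histExp S gV n [] with hW
  -- termProb is monotone, hence bounded by L
  have htermMono : Monotone fun n => termProb S n := by
    have := termWeighted_mono S (fun _ => (1 : ℝ)) (fun _ => zero_le_one)
    simpa [termProb] using this
  have htermLe : ∀ n, termProb S n ≤ L := by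
    intro n
    exact ge_of_tendsto hL (Filter.eventually_atTop.2 ⟨n, fun m hm => htermMono hm⟩)
  -- ε > 0
  have hε : 0 < Vlo * (1 - L) := mul_pos hVlo (by linarith)
  set ε : ℝ := Vlo * (1 - L) with hεdef
  -- infUtility = ⨆ W
  have hinf : infUtility v S = ⨆ n, W n := rfl
  -- pick n with infUtility - ε < W n
  have hlt : infUtility v S - ε < infUtility v S := by linarith
  rw [hinf] at hlt
  obtain ⟨n, hn⟩ := exists_lt_of_lt_ciSup hlt
  refine ⟨n, S, ?_⟩
  -- key pointwise inequality
  have hpt : ∀ ξ : Hist Ω,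
      1 * gV ξ + (-Vlo) * gT ξ + Vlo ≤ v (lastBelief μ ξ) := by
    intro ξ
    simp only [hgV, hgT]
    by_cases hT : TerminatesAfter S ξ
    · rw [if_pos hT, if_pos hT]; ring_nf; exact le_rfl
    · rw [if_neg hT, if_neg hT]
      have := hvlo (lastBelief μ ξ)
      linarith
  have hkey : W n + Vlo * (1 - termProb S n) ≤ stepUtility v S n := by
    have h1 := histExp_mono S hpt n []
    rw [histExp_combo S gV gT 1 (-Vlo) Vlo n []] at h1
    unfold stepUtility
    unfold termProb
    have hgTeq : histExp S
        (fun ξ => if TerminatesAfter S ξ then (1 : ℝ) else 0) n []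
        = histExp S gT n [] := rfl
    rw [hgTeq]
    linarith
  have h2 : Vlo * (1 - L) ≤ Vlo * (1 - termProb S n) := by
    have := htermLe n
    have : 1 - L ≤ 1 - termProb S n := by linarith
    exact mul_le_mul_of_nonneg_left this hVlo.le
  rw [hinf]
  calc (⨆ m, W m) < W n + ε := by linarith
    _ ≤ W n + Vlo * (1 - termProb S n) := by rw [hεdef]; linarith
    _ ≤ stepUtility v S n := hkey
end

section
/- The function v_∞ itself belongs to the set G; that is, v_∞ ≥ v pointwise, and v_∞(σ(e)) ≥ Σ_{j∈[m]} λ_j v_∞(p_j) for every experiment e = (λ_j, p_j)_{j∈[m]} ∈ F. -/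
open Filter Topology
open scoped Classical

/-!
Playing a feasible experiment `e` and then a near-optimal strategy from each realized
posterior gives a strategy from `σ(e)` worth the `e`-average of those values. Its value is
a limit rather than an arbitrary supremum because, for `v ≥ 0`, the expected terminal payoff
after `n` steps is nondecreasing in `n`: a terminated history stays terminated and keeps its
payoff. So values pass through the finite average, and `v_∞` is concave along `e`.
-/

noncomputable section

variable {Ω : Type*} [Fintype Ω] {F : Set (SPExp Ω)} {μ : Belief Ω}

namespace SPExp

lemma expect_le_expect (e : SPExp Ω) {f g : Belief Ω → ℝ} (h : ∀ p ∈ e.tau, f p ≤ g p) :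
    e.expect f ≤ e.expect g :=
  Finset.sum_le_sum fun p hp => mul_le_mul_of_nonneg_left (h p hp) (e.nonneg p)

lemma expect_nonneg_s4 (e : SPExp Ω) {f : Belief Ω → ℝ} (h : ∀ p, 0 ≤ f p) : 0 ≤ e.expect f :=
  Finset.sum_nonneg fun p _ => mul_nonneg (e.nonneg p) (h p)

lemma expect_const (e : SPExp Ω) (c : ℝ) : e.expect (fun _ => c) = c := by
  rw [expect, ← Finset.sum_mul, e.sum_one, one_mul]

lemma expect_sub_const (e : SPExp Ω) (f : Belief Ω → ℝ) (c : ℝ) :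
    e.expect (fun p => f p - c) = e.expect f - c := by
  simp only [expect, mul_sub, Finset.sum_sub_distrib]
  rw [← Finset.sum_mul, e.sum_one, one_mul]

lemma expect_le_const (e : SPExp Ω) {f : Belief Ω → ℝ} {C : ℝ} (h : ∀ p, f p ≤ C) :
    e.expect f ≤ C :=
  (e.expect_le_expect fun p _ => h p).trans_eq (e.expect_const C)

@[simp]
lemma expect_triv_s4 (p : Belief Ω) (f : Belief Ω → ℝ) : (triv p).expect f = f p := by
  simp [expect, triv]

@[simp]
lemma sigma_triv (p : Belief Ω) : (triv p).sigma = p := by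
  ext ω
  simp [sigma, triv]

end SPExp

lemma lastBelief_padHist (μ : Belief Ω) (ξ : Hist Ω) (l : ℕ) :
    lastBelief μ (padHist μ ξ l) = lastBelief μ ξ := by
  cases l <;> simp [padHist, List.replicate_succ, lastBelief]

@[simp]
lemma lastBelief_cons (μ : Belief Ω) (x : SPExp Ω × Belief Ω) (ξ : Hist Ω) :
    lastBelief μ (x :: ξ) = x.2 :=
  rfl

lemma lastBelief_append_singleton (μ : Belief Ω) (ξ : Hist Ω) (x : SPExp Ω × Belief Ω) :
    lastBelief μ (ξ ++ [x]) = lastBelief x.2 ξ := by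
  cases ξ <;> rfl

lemma histExp_le (S : SeqP F μ) {g : Hist Ω → ℝ} {C : ℝ} (hg : ∀ ξ, g ξ ≤ C) :
    ∀ n ξ, histExp S g n ξ ≤ C
  | 0, ξ => hg ξ
  | n + 1, _ => SPExp.expect_le_const _ fun _ => histExp_le S hg n _

lemma TerminatesAfter.next_eq {S : SeqP F μ} {ξ : Hist Ω} (h : TerminatesAfter S ξ) :
    S.next ξ = SPExp.triv (lastBelief μ ξ) :=
  h 0

lemma TerminatesAfter.cons_triv {S : SeqP F μ} {ξ : Hist Ω} (h : TerminatesAfter S ξ) :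
    TerminatesAfter S ((SPExp.triv (lastBelief μ ξ), lastBelief μ ξ) :: ξ) := fun l => by
  simpa [padHist, lastBelief, List.replicate_succ'] using h (l + 1)

namespace SeqP

def trivial (hTF : Trivials Ω ⊆ F) (μ : Belief Ω) : SeqP F μ where
  next ξ := SPExp.triv (lastBelief μ ξ)
  feasible _ := hTF ⟨_, rfl⟩
  bayes _ := SPExp.sigma_triv _

lemma terminatesAfter_trivial (hTF : Trivials Ω ⊆ F) (μ : Belief Ω) (ξ : Hist Ω) :
    TerminatesAfter (trivial hTF μ) ξ := fun l =>
  congrArg SPExp.triv (lastBelief_padHist μ ξ l)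

/-- Play `e` first, then follow `S p` from the realized posterior `p` (which sits at the end
of the history, since histories list the most recent step first). -/
def prepend (e : SPExp Ω) (he : e ∈ F) (S : ∀ p : Belief Ω, SeqP F p) : SeqP F e.sigma where
  next ξ := if h : ξ = [] then e else (S (ξ.getLast h).2).next ξ.dropLast
  feasible ξ := by
    split
    · exact he
    · exact (S _).feasible _
  bayes ξ := by
    split
    · next h => subst h; rfl
    · next h =>
      rw [(S _).bayes]
      obtain ⟨ξ, x, rfl⟩ := List.eq_nil_or_concat ξ |>.resolve_left h
      simp [lastBelief_append_singleton]

variable (e : SPExp Ω) (he : e ∈ F) (S : ∀ p : Belief Ω, SeqP F p)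

lemma prepend_next_append_singleton (ξ : Hist Ω) (x : SPExp Ω × Belief Ω) :
    (prepend e he S).next (ξ ++ [x]) = (S x.2).next ξ := by
  simp only [prepend, List.append_eq_nil_iff, List.cons_ne_nil, and_false, dite_false,
    List.dropLast_concat]
  exact congrArg (fun y : SPExp Ω × Belief Ω => (S y.2).next ξ) List.getLast_concat

lemma terminatesAfter_prepend_append_singleton (ξ : Hist Ω) (x : SPExp Ω × Belief Ω) :
    TerminatesAfter (prepend e he S) (ξ ++ [x]) ↔ TerminatesAfter (S x.2) ξ := by
  have hpad (l : ℕ) : padHist e.sigma (ξ ++ [x]) l = padHist x.2 ξ l ++ [x] := by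
    simp [padHist, lastBelief_append_singleton]
  simp only [TerminatesAfter, hpad, prepend_next_append_singleton, lastBelief_append_singleton]

lemma histExp_prepend_append_singleton (g : Hist Ω → ℝ) (x : SPExp Ω × Belief Ω) :
    ∀ n ξ, histExp (prepend e he S) g n (ξ ++ [x]) =
      histExp (S x.2) (fun ζ => g (ζ ++ [x])) n ξ
  | 0, _ => rfl
  | n + 1, ξ => by
    simp only [histExp, prepend_next_append_singleton]
    exact congrArg _ (funext fun p => histExp_prepend_append_singleton g x n (_ :: ξ))

end SeqP

def termPayoff (v : Belief Ω → ℝ) (S : SeqP F μ) (ξ : Hist Ω) : ℝ :=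
  if TerminatesAfter S ξ then v (lastBelief μ ξ) else 0

lemma infUtility_eq_iSup (v : Belief Ω → ℝ) (S : SeqP F μ) :
    infUtility v S = ⨆ n, histExp S (termPayoff v S) n [] :=
  rfl

lemma termPayoff_prepend_append_singleton (v : Belief Ω → ℝ) (e : SPExp Ω) (he : e ∈ F)
    (S : ∀ p : Belief Ω, SeqP F p) (x : SPExp Ω × Belief Ω) :
    (fun ξ => termPayoff v (SeqP.prepend e he S) (ξ ++ [x])) = termPayoff v (S x.2) := by
  ext ξ
  simp only [termPayoff, SeqP.terminatesAfter_prepend_append_singleton,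
    lastBelief_append_singleton]

lemma termPayoff_nonneg {v : Belief Ω → ℝ} (hv : ∀ p, 0 ≤ v p) (S : SeqP F μ) (ξ : Hist Ω) :
    0 ≤ termPayoff v S ξ := by
  unfold termPayoff
  split
  exacts [hv _, le_rfl]

lemma termPayoff_le {v : Belief Ω → ℝ} {C : ℝ} (hvC : ∀ p, v p ≤ C) (hC : 0 ≤ C)
    (S : SeqP F μ) (ξ : Hist Ω) : termPayoff v S ξ ≤ C := by
  unfold termPayoff
  split
  exacts [hvC _, hC]

lemma histExp_termPayoff_le_succ {v : Belief Ω → ℝ} (hv : ∀ p, 0 ≤ v p) (S : SeqP F μ) :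
    ∀ n ξ, histExp S (termPayoff v S) n ξ ≤ histExp S (termPayoff v S) (n + 1) ξ
  | 0, ξ => by
    by_cases h : TerminatesAfter S ξ
    · simp [histExp, h.next_eq, termPayoff, h, h.cons_triv]
    · simp only [histExp, termPayoff, if_neg h]
      exact SPExp.expect_nonneg_s4 _ fun _ => termPayoff_nonneg hv S _
  | n + 1, _ => SPExp.expect_le_expect _ fun _ _ => histExp_termPayoff_le_succ hv S n _

lemma tendsto_histExp_termPayoff {v : Belief Ω → ℝ} {C : ℝ} (hv : ∀ p, 0 ≤ v p)
    (hvC : ∀ p, v p ≤ C) (hC : 0 ≤ C) (S : SeqP F μ) :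
    Tendsto (fun n => histExp S (termPayoff v S) n []) atTop (𝓝 (infUtility v S)) :=
  tendsto_atTop_ciSup
    (monotone_nat_of_le_succ fun n => histExp_termPayoff_le_succ hv S n [])
    ⟨C, Set.forall_mem_range.2 fun n => histExp_le S (termPayoff_le hvC hC S) n []⟩

lemma infUtility_le {v : Belief Ω → ℝ} {C : ℝ} (hvC : ∀ p, v p ≤ C) (hC : 0 ≤ C)
    (S : SeqP F μ) : infUtility v S ≤ C :=
  ciSup_le fun n => histExp_le S (termPayoff_le hvC hC S) n []

lemma infUtility_trivial (v : Belief Ω → ℝ) (hTF : Trivials Ω ⊆ F) (μ : Belief Ω) :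
    infUtility v (SeqP.trivial hTF μ) = v μ := by
  have key : ∀ n ξ, histExp (SeqP.trivial hTF μ) (termPayoff v (SeqP.trivial hTF μ)) n ξ
      = v (lastBelief μ ξ) := by
    intro n
    induction n with
    | zero => intro ξ; simp [histExp, termPayoff, SeqP.terminatesAfter_trivial]
    | succ n ih =>
      intro ξ
      change (SPExp.triv (lastBelief μ ξ)).expect _ = _
      simp [ih]
  simp [infUtility_eq_iSup, key, lastBelief]

lemma infUtility_prepend {v : Belief Ω → ℝ} {C : ℝ} (hv : ∀ p, 0 ≤ v p) (hvC : ∀ p, v p ≤ C)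
    (hC : 0 ≤ C) (e : SPExp Ω) (he : e ∈ F) (S : ∀ p : Belief Ω, SeqP F p) :
    infUtility v (SeqP.prepend e he S) = e.expect fun p => infUtility v (S p) := by
  have hstep (n : ℕ) :
      histExp (SeqP.prepend e he S) (termPayoff v (SeqP.prepend e he S)) (n + 1) [] =
        e.expect fun p => histExp (S p) (termPayoff v (S p)) n [] := by
    change e.expect (fun p => histExp _ _ n ([] ++ [(e, p)])) = _
    simp only [SeqP.histExp_prepend_append_singleton, termPayoff_prepend_append_singleton]
  refine tendsto_nhds_unique
    ((tendsto_add_atTop_iff_nat 1).2 (tendsto_histExp_termPayoff hv hvC hC _)) ?_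
  simp only [hstep]
  exact tendsto_finsetSum _ fun p _ =>
    (tendsto_histExp_termPayoff hv hvC hC (S p)).const_mul _

section vInf

variable {v : Belief Ω → ℝ} {C : ℝ}

lemma bddAbove_range_infUtility (hvC : ∀ p, v p ≤ C) (hC : 0 ≤ C) (μ : Belief Ω) :
    BddAbove (Set.range fun S : SeqP F μ => infUtility v S) :=
  ⟨C, Set.forall_mem_range.2 (infUtility_le hvC hC)⟩

lemma le_vInf (hTF : Trivials Ω ⊆ F) (hvC : ∀ p, v p ≤ C) (hC : 0 ≤ C) (μ : Belief Ω) :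
    v μ ≤ vInf F v μ :=
  (infUtility_trivial v hTF μ).symm.le.trans
    (le_ciSup (bddAbove_range_infUtility hvC hC μ) (SeqP.trivial hTF μ))

lemma expect_vInf_le (hTF : Trivials Ω ⊆ F) (hv : ∀ p, 0 ≤ v p) (hvC : ∀ p, v p ≤ C)
    (hC : 0 ≤ C) {e : SPExp Ω} (he : e ∈ F) : e.expect (vInf F v) ≤ vInf F v e.sigma := by
  refine le_of_forall_pos_le_add fun ε hε => ?_
  have hnear (p : Belief Ω) : ∃ S : SeqP F p, vInf F v p - ε < infUtility v S :=
    haveI : Nonempty (SeqP F p) := ⟨SeqP.trivial hTF p⟩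
    exists_lt_of_lt_ciSup (sub_lt_self _ hε)
  choose S hS using hnear
  calc e.expect (vInf F v)
      = e.expect (fun p => vInf F v p - ε) + ε := by rw [SPExp.expect_sub_const]; ring
    _ ≤ e.expect (fun p => infUtility v (S p)) + ε := by
      gcongr
      exact e.expect_le_expect fun p _ => (hS p).le
    _ = infUtility v (SeqP.prepend e he S) + ε := by rw [infUtility_prepend hv hvC hC]
    _ ≤ vInf F v e.sigma + ε := by
      gcongr
      exact le_ciSup (bddAbove_range_infUtility hvC hC _) _

end vInf

end

theorem vInf_mem_G_general {Ω : Type*} [Fintype Ω]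
    (F : Set (SPExp Ω)) (hTF : Trivials Ω ⊆ F)
    (v : Belief Ω → ℝ) (Vlo Vhi : ℝ) (hVlo : 0 < Vlo) (hVV : Vlo ≤ Vhi)
    (hvlo : ∀ p, Vlo ≤ v p) (hvhi : ∀ p, v p ≤ Vhi) :
    (∀ p : Belief Ω, v p ≤ vInf F v p) ∧
    ∀ e ∈ F, SPExp.expect e (vInf F v) ≤ vInf F v (SPExp.sigma e) := by
  have hv : ∀ p, 0 ≤ v p := fun p => hVlo.le.trans (hvlo p)
  have hC : 0 ≤ Vhi := hVlo.le.trans hVV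
  exact ⟨le_vInf hTF hvhi hC, fun e he => expect_vInf_le hTF hv hvhi hC he⟩

/-- v_∞ itself belongs to G: it dominates v and is "concave along" every feasible
experiment. -/
theorem vInf_mem_G {Ω : Type*} [Fintype Ω] [Nonempty Ω]
    (F : Set (SPExp Ω)) (hTF : Trivials Ω ⊆ F)
    (v : Belief Ω → ℝ) (Vlo Vhi : ℝ) (hVlo : 0 < Vlo) (hVV : Vlo ≤ Vhi)
    (hvlo : ∀ p, Vlo ≤ v p) (hvhi : ∀ p, v p ≤ Vhi)
    (husc : UpperSemicontinuous v) :
    (∀ p : Belief Ω, v p ≤ vInf F v p) ∧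
    ∀ e ∈ F, SPExp.expect e (vInf F v) ≤ vInf F v (SPExp.sigma e) :=
  vInf_mem_G_general F hTF v Vlo Vhi hVlo hVV hvlo hvhi
end

section
/- For any upper semicontinuous bounded utility v: Δ(Ω) → ℝ and any prior μ ∈ Δ(Ω), there exists a set O ⊆ Δ(Ω) with μ ∈ conv(O) such that for every p ∈ conv(O) and every experiment e = (λ_j, p_j)_{j∈[m]} ∈ F_0 with σ(e) = p, one has Σ_{j∈[m]} λ_j v(p_j) = v̂(p) if and only if τ(e) ⊆ O. -/
open Filter Topology
open scoped Classical

/-!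
Take `O` to be the union of the supports of all optimal experiments at `μ`; one exists because
the convex hull of the (compact) truncated hypograph of `v` is compact by Carathéodory.
Optimality passes to sub-experiments: if `τ(f) ⊆ τ(e₀)` then `e₀ = t f + (1 - t) e'` with
`t > 0`, and an experiment beating `f` at `σ(f)` would beat `e₀` at `σ(e₀)`. Mixtures of optimal
experiments at `μ` are optimal, so every finite subset of `O` lies in the support of a single
optimal experiment at `μ`; this gives `⇐`. For `⇒`, write `p` as the barycenter of a component
`f` of such an experiment `e₁`; replacing `f` by an optimal `e` at `p` changes neither the value
nor the barycenter of `e₁`, hence `τ(e) ⊆ O`.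
-/

open Finset

protected theorem IsCompact.convexHull {E : Type*} [NormedAddCommGroup E] [NormedSpace ℝ E]
    [FiniteDimensional ℝ E] {s : Set E} (hs : IsCompact s) : IsCompact (convexHull ℝ s) := by
  rcases s.eq_empty_or_nonempty with rfl | ⟨x₀, hx₀⟩
  · simp
  set N := Module.finrank ℝ E + 1
  suffices convexHull ℝ s = (fun wz : (Fin N → ℝ) × (Fin N → E) => ∑ j, wz.1 j • wz.2 j) ''
      (stdSimplex ℝ (Fin N) ×ˢ Set.univ.pi fun _ => s) by
    rw [this]
    exact ((isCompact_stdSimplex ℝ _).prod (isCompact_univ_pi fun _ => hs)).image (by fun_prop)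
  refine subset_antisymm (fun x hx => ?_) ?_
  · -- Carathéodory: `x` is a convex combination of at most `N` points of `s`; pad it to `N`.
    obtain ⟨ι, _, z, w, hzs, hind, hw₀, hw₁, rfl⟩ := eq_pos_convex_span_of_mem_convexHull hx
    obtain ⟨g⟩ : Nonempty (ι ↪ Fin N) := Function.Embedding.nonempty_of_card_le <| by
      simpa [N] using hind.card_le_finrank_succ.trans (Nat.succ_le_succ (Submodule.finrank_le _))
    refine ⟨(Function.extend g w 0, Function.extend g z fun _ => x₀),
      ⟨⟨fun j => ?_, ?_⟩, fun j _ => ?_⟩, ?_⟩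
    · by_cases hj : j ∈ Set.range g
      · obtain ⟨i, rfl⟩ := hj
        simpa [g.injective.extend_apply] using (hw₀ i).le
      · simp [Function.extend_apply' _ _ _ hj]
    · rw [← hw₁]
      exact (Fintype.sum_of_injective g g.injective _ _
        (fun j hj => by simp [Function.extend_apply' _ _ _ hj])
        fun i => by simp [g.injective.extend_apply]).symm
    · by_cases hj : j ∈ Set.range g
      · obtain ⟨i, rfl⟩ := hj
        simpa [g.injective.extend_apply] using hzs ⟨i, rfl⟩
      · simpa [Function.extend_apply' _ _ _ hj] using hx₀
    · exact (Fintype.sum_of_injective g g.injective _ _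
        (fun j hj => by simp [Function.extend_apply' _ _ _ hj])
        fun i => by simp [g.injective.extend_apply]).symm
  · rintro _ ⟨⟨w, z⟩, ⟨⟨hw₀, hw₁⟩, hz⟩, rfl⟩
    exact (convex_convexHull ℝ s).sum_mem (fun j _ => hw₀ j) hw₁
      fun j _ => subset_convexHull ℝ s (hz j trivial)

namespace SPExp

variable {Ω : Type*} [Fintype Ω]

theorem expect_eq_linearCombination (e : SPExp Ω) (f : Belief Ω → ℝ) :
    e.expect f = Finsupp.linearCombination ℝ f e.w := by
  simp [expect, Finsupp.linearCombination_apply, Finsupp.sum]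

theorem sum_support_eq_linearCombination (w : Belief Ω →₀ ℝ) :
    ∑ p ∈ w.support, w p = Finsupp.linearCombination ℝ (fun _ => (1 : ℝ)) w := by
  simp [Finsupp.linearCombination_apply, Finsupp.sum]

theorem sigma_val_apply (e : SPExp Ω) (ω : Ω) :
    e.sigma.val ω = e.expect fun q => q.val ω := rfl

theorem mem_tau {e : SPExp Ω} {q : Belief Ω} : q ∈ e.tau ↔ 0 < e.w q :=
  Finsupp.mem_support_iff.trans (e.nonneg q).lt_iff_ne'.symm

section Mixture

variable {e e₁ e₂ : SPExp Ω} {t : ℝ}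

theorem expect_of_w_eq (h : e.w = t • e₁.w + (1 - t) • e₂.w) (f : Belief Ω → ℝ) :
    e.expect f = t * e₁.expect f + (1 - t) * e₂.expect f := by
  simp only [expect_eq_linearCombination, h, map_add, map_smul, smul_eq_mul]

theorem sigma_val_of_w_eq (h : e.w = t • e₁.w + (1 - t) • e₂.w) :
    e.sigma.val = t • e₁.sigma.val + (1 - t) • e₂.sigma.val :=
  funext fun _ => expect_of_w_eq h _

noncomputable def mix (e₁ e₂ : SPExp Ω) (t : ℝ) (ht : t ∈ Set.Icc (0 : ℝ) 1) : SPExp Ω where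
  w := t • e₁.w + (1 - t) • e₂.w
  nonneg p :=
    add_nonneg (mul_nonneg ht.1 (e₁.nonneg p)) (mul_nonneg (sub_nonneg.2 ht.2) (e₂.nonneg p))
  sum_one := by
    rw [sum_support_eq_linearCombination, map_add, map_smul, map_smul,
      ← sum_support_eq_linearCombination, ← sum_support_eq_linearCombination, e₁.sum_one,
      e₂.sum_one, smul_eq_mul, smul_eq_mul]
    ring

theorem tau_mix (ht : t ∈ Set.Ioo (0 : ℝ) 1) :
    (mix e₁ e₂ t (Set.Ioo_subset_Icc_self ht)).tau = e₁.tau ∪ e₂.tau := by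
  ext q
  have h₁ := e₁.nonneg q
  have h₂ := e₂.nonneg q
  have ht' : 0 < 1 - t := sub_pos.2 ht.2
  simp only [mem_union, mem_tau]
  change 0 < t * e₁.w q + (1 - t) * e₂.w q ↔ _
  constructor
  · intro h
    by_contra! h'
    nlinarith
  · rintro (h | h)
    · exact add_pos_of_pos_of_nonneg (mul_pos ht.1 h) (mul_nonneg ht'.le h₂)
    · exact add_pos_of_nonneg_of_pos (mul_nonneg ht.1.le h₁) (mul_pos ht' h)

theorem exists_w_eq_of_tau_subset (h : e₁.tau ⊆ e.tau) :
    ∃ t ∈ Set.Ioo (0 : ℝ) 1, ∃ e₂ : SPExp Ω, e.w = t • e₁.w + (1 - t) • e₂.w := by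
  have small : ∀ᶠ t in 𝓝[>] (0 : ℝ), t < 1 ∧ ∀ q ∈ e₁.tau, t * e₁.w q < e.w q := by
    refine nhdsWithin_le_nhds ((eventually_lt_nhds one_pos).and
      ((eventually_all_finset _).2 fun q hq => ?_))
    exact ((continuous_mul_const _).tendsto' 0 0 (zero_mul _)).eventually
      (gt_mem_nhds (mem_tau.1 (h hq)))
  obtain ⟨t, ⟨ht₁, hlt⟩, ht₀⟩ := (small.and self_mem_nhdsWithin).exists
  have ht : 1 - t ≠ 0 := (sub_pos.2 ht₁).ne'
  refine ⟨t, ⟨ht₀, ht₁⟩, ⟨(1 - t)⁻¹ • (e.w - t • e₁.w), fun q => ?_, ?_⟩, ?_⟩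
  · refine mul_nonneg (inv_nonneg.2 (sub_pos.2 ht₁).le) (sub_nonneg.2 ?_)
    by_cases hq : q ∈ e₁.tau
    · exact (hlt q hq).le
    · simpa [Finsupp.notMem_support_iff.1 hq] using e.nonneg q
  · rw [sum_support_eq_linearCombination, map_smul, map_sub, map_smul,
      ← sum_support_eq_linearCombination, ← sum_support_eq_linearCombination, e.sum_one,
      e₁.sum_one, smul_eq_mul, smul_eq_mul, mul_one, inv_mul_cancel₀ ht]
  · rw [smul_smul, mul_inv_cancel₀ ht, one_smul, add_sub_cancel]

end Mixture

section Combination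

noncomputable def ofCombination {ι : Type*} (s : Finset ι) (w : ι → ℝ) (q : ι → Belief Ω)
    (hw₀ : ∀ i ∈ s, 0 ≤ w i) (hw₁ : ∑ i ∈ s, w i = 1) : SPExp Ω where
  w := ∑ i ∈ s, Finsupp.single (q i) (w i)
  nonneg p := by
    rw [Finsupp.finsetSum_apply]
    refine sum_nonneg fun i hi => ?_
    rw [Finsupp.single_apply]
    split_ifs
    exacts [hw₀ i hi, le_rfl]
  sum_one := by
    rw [sum_support_eq_linearCombination, map_sum]
    simpa using hw₁

variable {ι : Type*} {s : Finset ι} {w : ι → ℝ} {q : ι → Belief Ω}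
  {hw₀ : ∀ i ∈ s, 0 ≤ w i} {hw₁ : ∑ i ∈ s, w i = 1}

theorem expect_ofCombination (f : Belief Ω → ℝ) :
    (ofCombination s w q hw₀ hw₁).expect f = ∑ i ∈ s, w i * f (q i) := by
  simp [expect_eq_linearCombination, ofCombination, map_sum]

theorem sigma_val_ofCombination :
    (ofCombination s w q hw₀ hw₁).sigma.val = ∑ i ∈ s, w i • (q i).val := by
  ext ω
  simp [sigma_val_apply, expect_ofCombination]

theorem tau_ofCombination_subset [DecidableEq (Belief Ω)] :
    (ofCombination s w q hw₀ hw₁).tau ⊆ s.image q := by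
  refine Finsupp.support_finsetSum.trans fun p hp => ?_
  obtain ⟨i, hi, hp⟩ := mem_biUnion.1 hp
  exact mem_image.2 ⟨i, hi, (mem_singleton.1 (Finsupp.support_single_subset hp)).symm⟩

end Combination

theorem sigma_mem_convexHull (e : SPExp Ω) :
    e.sigma.val ∈ convexHull ℝ (Subtype.val '' (e.tau : Set (Belief Ω))) := by
  have : e.sigma.val = ∑ q ∈ e.tau, e.w q • q.val := by
    ext ω
    simp [sigma_val_apply, expect, tau]
  rw [this]
  exact (convex_convexHull ℝ _).sum_mem (fun q _ => e.nonneg q) e.sum_one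
    fun q hq => subset_convexHull ℝ _ ⟨q, hq, rfl⟩

theorem exists_sigma_eq_of_mem_convexHull {O : Set (Belief Ω)} {p : Belief Ω}
    (hp : p.val ∈ convexHull ℝ (Subtype.val '' O)) :
    ∃ f : SPExp Ω, f.sigma = p ∧ ↑f.tau ⊆ O := by
  obtain ⟨ι, _, w, z, hw₀, hw₁, hz, hp⟩ := mem_convexHull_iff_exists_fintype.1 hp
  choose q hqO hqz using hz
  refine ⟨ofCombination univ w q (fun i _ => hw₀ i) hw₁, Subtype.ext ?_, fun r hr => ?_⟩
  · simp [sigma_val_ofCombination, hqz, hp]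
  · obtain ⟨i, -, rfl⟩ := mem_image.1 (tau_ofCombination_subset hr)
    exact hqO i

def IsOptimal (v : Belief Ω → ℝ) (e : SPExp Ω) : Prop :=
  e.expect v = concaveClosure v e.sigma

section Optimal

variable {v : Belief Ω → ℝ} {C : ℝ} {e e' f g : SPExp Ω} {t : ℝ}

theorem expect_le_concaveClosure (hC : ∀ p, v p ≤ C) (e : SPExp Ω) :
    e.expect v ≤ concaveClosure v e.sigma := by
  refine le_csSup ⟨C, ?_⟩ ⟨e, rfl, rfl⟩
  rintro _ ⟨f, -, rfl⟩
  calc f.expect v ≤ ∑ q ∈ f.w.support, f.w q * C :=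
        sum_le_sum fun q _ => mul_le_mul_of_nonneg_left (hC q) (f.nonneg q)
    _ = C := by rw [← sum_mul, f.sum_one, one_mul]

theorem IsOptimal.congr (he : IsOptimal v e) (hσ : g.sigma = e.sigma)
    (hE : g.expect v = e.expect v) : IsOptimal v g := by
  rw [IsOptimal, hσ, hE, he]

theorem isOptimal_mix {e₁ e₂ : SPExp Ω} (he₁ : IsOptimal v e₁) (he₂ : IsOptimal v e₂)
    (hσ : e₁.sigma = e₂.sigma) (ht : t ∈ Set.Icc (0 : ℝ) 1) :
    IsOptimal v (mix e₁ e₂ t ht) ∧ (mix e₁ e₂ t ht).sigma = e₁.sigma := by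
  have hσmix : (mix e₁ e₂ t ht).sigma = e₁.sigma := by
    ext : 1
    rw [sigma_val_of_w_eq rfl, ← hσ, ← add_smul, add_sub_cancel, one_smul]
  refine ⟨?_, hσmix⟩
  rw [IsOptimal, expect_of_w_eq rfl, hσmix, he₁, he₂, ← hσ]
  ring

section Replace

variable (hw : e.w = t • f.w + (1 - t) • e'.w)
include hw

theorem sigma_mix_of_w_eq (ht : t ∈ Set.Icc (0 : ℝ) 1) (hσ : g.sigma = f.sigma) :
    (mix g e' t ht).sigma = e.sigma := by
  ext : 1
  rw [sigma_val_of_w_eq rfl, sigma_val_of_w_eq hw, hσ]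

theorem expect_mix_of_w_eq (ht : t ∈ Set.Icc (0 : ℝ) 1) (v : Belief Ω → ℝ) :
    (mix g e' t ht).expect v = e.expect v + t * (g.expect v - f.expect v) := by
  rw [expect_of_w_eq rfl, expect_of_w_eq hw]
  ring

theorem IsOptimal.of_w_eq (hC : ∀ p, v p ≤ C) (he : IsOptimal v e)
    (ht : t ∈ Set.Ioo (0 : ℝ) 1) : IsOptimal v f := by
  refine le_antisymm (expect_le_concaveClosure hC f) (not_lt.1 fun hlt => ?_)
  obtain ⟨_, ⟨g, hσ, rfl⟩, hgt⟩ := exists_lt_of_lt_csSup (by exact ⟨_, f, rfl, rfl⟩) hlt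
  have hmix := expect_le_concaveClosure hC (mix g e' t (Set.Ioo_subset_Icc_self ht))
  rw [expect_mix_of_w_eq hw, sigma_mix_of_w_eq hw _ hσ, ← he] at hmix
  nlinarith [ht.1]

end Replace

theorem IsOptimal.of_tau_subset (hC : ∀ p, v p ≤ C) (he : IsOptimal v e)
    (h : f.tau ⊆ e.tau) : IsOptimal v f :=
  let ⟨_, ht, _, hw⟩ := exists_w_eq_of_tau_subset h
  he.of_w_eq hw hC ht

end Optimal

end SPExp

open SPExp

section

variable {Ω : Type*} [Fintype Ω]

def optimalSupport (v : Belief Ω → ℝ) (μ : Belief Ω) : Set (Belief Ω) :=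
  {q | ∃ e : SPExp Ω, e.sigma = μ ∧ IsOptimal v e ∧ q ∈ e.tau}

theorem exists_isOptimal_subset_tau {v : Belief Ω → ℝ} {μ : Belief Ω}
    (h₀ : ∃ e : SPExp Ω, e.sigma = μ ∧ IsOptimal v e) (s : Finset (Belief Ω))
    (hs : ↑s ⊆ optimalSupport v μ) :
    ∃ e : SPExp Ω, e.sigma = μ ∧ IsOptimal v e ∧ s ⊆ e.tau := by
  induction s using Finset.induction_on with
  | empty => exact h₀.imp fun e he => ⟨he.1, he.2, empty_subset _⟩
  | insert q s _ ih =>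
    obtain ⟨e₁, hσ₁, he₁, hq⟩ := hs (mem_insert_self q s)
    obtain ⟨e₂, hσ₂, he₂, hs₂⟩ := ih ((coe_subset.2 (subset_insert q s)).trans hs)
    have ht : (1 / 2 : ℝ) ∈ Set.Ioo 0 1 := by norm_num
    obtain ⟨hopt, hσ⟩ := isOptimal_mix he₁ he₂ (hσ₁.trans hσ₂.symm) (Set.Ioo_subset_Icc_self ht)
    refine ⟨_, hσ.trans hσ₁, hopt, ?_⟩
    rw [tau_mix ht]
    exact insert_subset (mem_union_left _ hq) (hs₂.trans subset_union_right)

def truncHypograph (v : Belief Ω → ℝ) (C : ℝ) : Set ((Ω → ℝ) × ℝ) :=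
  (fun a : Belief Ω × ℝ => (a.1.val, a.2)) '' {a | -C ≤ a.2 ∧ a.2 ≤ v a.1}

variable {v : Belief Ω → ℝ} {C : ℝ}

theorem isCompact_truncHypograph (husc : UpperSemicontinuous v) (hC : ∀ p, v p ≤ C) :
    IsCompact (truncHypograph v C) := by
  refine IsCompact.image ?_ (by fun_prop)
  have : CompactSpace (Belief Ω) := isCompact_iff_compactSpace.1 (isCompact_stdSimplex ℝ Ω)
  refine (isCompact_univ.prod (isCompact_Icc (a := -C) (b := C))).of_isClosed_subset
    ((isClosed_le continuous_const continuous_snd).inter husc.IsClosed_hypograph) ?_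
  rintro ⟨q, r⟩ ⟨h₁, h₂⟩
  exact ⟨trivial, h₁, h₂.trans (hC q)⟩

theorem mem_convexHull_truncHypograph (hbd : ∀ p, |v p| ≤ C) (e : SPExp Ω) :
    (e.sigma.val, e.expect v) ∈ convexHull ℝ (truncHypograph v C) := by
  have : (e.sigma.val, e.expect v) = ∑ q ∈ e.tau, e.w q • (q.val, v q) := by
    ext <;> simp [sigma_val_apply, SPExp.expect, tau, Prod.fst_sum, Prod.snd_sum]
  rw [this]
  exact (convex_convexHull ℝ _).sum_mem (fun q _ => e.nonneg q) e.sum_one fun q _ =>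
    subset_convexHull ℝ _ ⟨(q, v q), ⟨(abs_le.1 (hbd q)).1, le_rfl⟩, rfl⟩

theorem exists_sigma_eq_le_expect {p : Belief Ω} {r : ℝ}
    (h : (p.val, r) ∈ convexHull ℝ (truncHypograph v C)) :
    ∃ e : SPExp Ω, e.sigma = p ∧ r ≤ e.expect v := by
  obtain ⟨ι, _, w, z, hw₀, hw₁, hz, hzp⟩ := mem_convexHull_iff_exists_fintype.1 h
  choose a ha haz using hz
  refine ⟨ofCombination univ w (fun i => (a i).1) (fun i _ => hw₀ i) hw₁, ?_, ?_⟩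
  · ext : 1
    simpa [sigma_val_ofCombination, ← haz, Prod.fst_sum] using congrArg Prod.fst hzp
  · have hr : r = ∑ i, w i * (a i).2 := by
      simpa [← haz, Prod.snd_sum] using (congrArg Prod.snd hzp).symm
    rw [hr, expect_ofCombination]
    exact sum_le_sum fun i _ => mul_le_mul_of_nonneg_left (ha i).2 (hw₀ i)

theorem exists_isOptimal_sigma_eq (husc : UpperSemicontinuous v) (hbd : ∀ p, |v p| ≤ C)
    (μ : Belief Ω) : ∃ e : SPExp Ω, e.sigma = μ ∧ IsOptimal v e := by
  have hC : ∀ p, v p ≤ C := fun p => (abs_le.1 (hbd p)).2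
  have hK := (isCompact_truncHypograph husc hC).convexHull
  set S := {r : ℝ | (μ.val, r) ∈ convexHull ℝ (truncHypograph v C)}
  have hSbdd : BddAbove S := by
    refine (hK.image continuous_snd).bddAbove.mono ?_
    exact fun r hr => ⟨(μ.val, r), hr, rfl⟩
  have hS : sSup S ∈ S := IsClosed.csSup_mem (hK.isClosed.preimage (by fun_prop))
    ⟨v μ, subset_convexHull ℝ _ ⟨(μ, v μ), ⟨(abs_le.1 (hbd μ)).1, le_rfl⟩, rfl⟩⟩ hSbdd
  obtain ⟨e, hσ, hle⟩ := exists_sigma_eq_le_expect hS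
  refine ⟨e, hσ, le_antisymm (expect_le_concaveClosure hC e) ?_⟩
  rw [hσ, concaveClosure]
  refine (csSup_le ?_ ?_).trans hle
  · exact ⟨_, e, hσ, rfl⟩
  · rintro _ ⟨f, rfl, rfl⟩
    exact le_csSup hSbdd (mem_convexHull_truncHypograph hbd f)

end

theorem lem_support_identify_general {Ω : Type*} [Fintype Ω]
    (v : Belief Ω → ℝ) (husc : UpperSemicontinuous v)
    (C : ℝ) (hbd : ∀ p, |v p| ≤ C) (μ : Belief Ω) :
    ∃ O : Set (Belief Ω),
      μ.val ∈ convexHull ℝ (Subtype.val '' O) ∧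
      ∀ p : Belief Ω, p.val ∈ convexHull ℝ (Subtype.val '' O) →
        ∀ e : SPExp Ω, SPExp.sigma e = p →
          (SPExp.expect e v = concaveClosure v p ↔ ↑(SPExp.tau e) ⊆ O) := by
  have hC : ∀ p, v p ≤ C := fun p => (abs_le.1 (hbd p)).2
  obtain ⟨e₀, hσ₀, he₀⟩ := exists_isOptimal_sigma_eq husc hbd μ
  have hfin := exists_isOptimal_subset_tau ⟨e₀, hσ₀, he₀⟩
  refine ⟨optimalSupport v μ, ?_, fun p hp e hσ => ⟨fun he => ?_, fun heO => ?_⟩⟩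
  · have h₀O : ↑e₀.tau ⊆ optimalSupport v μ := fun q hq => ⟨e₀, hσ₀, he₀, hq⟩
    exact hσ₀ ▸ convexHull_mono (Set.image_mono h₀O) e₀.sigma_mem_convexHull
  · obtain ⟨f, rfl, hfO⟩ := exists_sigma_eq_of_mem_convexHull hp
    obtain ⟨e₁, hσ₁, he₁, hfe₁⟩ := hfin f.tau hfO
    obtain ⟨t, ht, e', hw⟩ := exists_w_eq_of_tau_subset hfe₁
    have hf : IsOptimal v f := he₁.of_w_eq hw hC ht
    set g := mix e e' t (Set.Ioo_subset_Icc_self ht)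
    have hg : IsOptimal v g := he₁.congr (sigma_mix_of_w_eq hw _ hσ) <| by
      rw [expect_mix_of_w_eq hw, he, hf, sub_self, mul_zero, add_zero]
    intro q hq
    refine ⟨g, (sigma_mix_of_w_eq hw _ hσ).trans hσ₁, hg, ?_⟩
    rw [tau_mix ht]
    exact mem_union_left _ hq
  · obtain ⟨e₁, -, he₁, hee₁⟩ := hfin e.tau heO
    exact hσ ▸ he₁.of_tau_subset hC hee₁

/-- Lemma 4 (lem-support-indentify): the optimal supports of Bayesian persuasion are
identified by a set O with μ ∈ conv(O). -/
theorem lem_support_identify {Ω : Type*} [Fintype Ω] [Nonempty Ω]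
    (v : Belief Ω → ℝ) (husc : UpperSemicontinuous v)
    (C : ℝ) (hbd : ∀ p, |v p| ≤ C) (μ : Belief Ω) :
    ∃ O : Set (Belief Ω),
      μ.val ∈ convexHull ℝ (Subtype.val '' O) ∧
      ∀ p : Belief Ω, p.val ∈ convexHull ℝ (Subtype.val '' O) →
        ∀ e : SPExp Ω, SPExp.sigma e = p →
          (SPExp.expect e v = concaveClosure v p ↔ ↑(SPExp.tau e) ⊆ O) :=
  lem_support_identify_general v husc C hbd μ
end
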